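/- For v ∈ (0, π) and a ≠ 0 with a²·cos(v) + a·sin(v) ≥ 0, the logarithmic derivative bound (d/dv) log f_a(v) ≤ 3/v holds, where f_a(v) = (1 + a·v + a²)·sin(v) − v·cos(v). -/

import Mathlib

/-!
Write `f_a(w) = (1 + a w + a²) sin w - w cos w`. Since `f_a = (sin v - v cos v) + a (a + v) sin v`
and `3 f_a(v) - v f_a'(v) = a² (3 sin v - v cos v) + a v (2 sin v - v cos v) + c₀(v)` with
`c₀(v) = (3 - v²) sin v - 3 v cos v`, everything reduces to the positivity of `sin v - v cos v`
and of `c₀` on `(0, π]`, which both vanish at `0` and have positive derivatives there.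
For `a ≥ 0` all terms are then nonnegative. For `a < 0` admissibility forces `cos v > 0` and
`a + v < 0`, and the quadratic is rewritten as a sum of nonnegative terms using the admissibility
expression `a² cos v + a sin v` itself.
-/

open Real Set

lemma pos_of_hasDerivAt_pos {g g' : ℝ → ℝ} {b v : ℝ} (hg : ∀ w, HasDerivAt g (g' w) w)
    (hg0 : g 0 = 0) (hg' : ∀ w ∈ Ioo 0 b, 0 < g' w) (hv0 : 0 < v) (hvb : v ≤ b) :
    0 < g v := by
  have hmono : StrictMonoOn g (Icc 0 b) :=
    strictMonoOn_of_hasDerivWithinAt_pos (convex_Icc 0 b)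
      (fun w _ => (hg w).continuousAt.continuousWithinAt) (fun w _ => (hg w).hasDerivWithinAt)
      (by rwa [interior_Icc])
  simpa [hg0] using hmono ⟨le_rfl, hv0.le.trans hvb⟩ ⟨hv0.le, hvb⟩ hv0

lemma hasDerivAt_sin_sub_mul_cos (w : ℝ) :
    HasDerivAt (fun w => sin w - w * cos w) (w * sin w) w :=
  ((hasDerivAt_sin w).sub ((hasDerivAt_id' w).mul (hasDerivAt_cos w))).congr_deriv (by ring)

lemma sin_sub_mul_cos_pos {v : ℝ} (hv0 : 0 < v) (hvπ : v ≤ π) : 0 < sin v - v * cos v :=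
  pos_of_hasDerivAt_pos (g := fun w => sin w - w * cos w) hasDerivAt_sin_sub_mul_cos (by simp)
    (fun w hw => mul_pos hw.1 (sin_pos_of_pos_of_lt_pi hw.1 hw.2)) hv0 hvπ

lemma hasDerivAt_three_sub_sq_mul_sin_sub_mul_cos (w : ℝ) :
    HasDerivAt (fun w => (3 - w ^ 2) * sin w - 3 * w * cos w) (w * (sin w - w * cos w)) w :=
  (((hasDerivAt_pow 2 w).const_sub 3).mul (hasDerivAt_sin w)).sub
    (((hasDerivAt_id' w).const_mul 3).mul (hasDerivAt_cos w)) |>.congr_deriv (by push_cast; ring)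

lemma three_sub_sq_mul_sin_sub_mul_cos_pos {v : ℝ} (hv0 : 0 < v) (hvπ : v ≤ π) :
    0 < (3 - v ^ 2) * sin v - 3 * v * cos v :=
  pos_of_hasDerivAt_pos (g := fun w => (3 - w ^ 2) * sin w - 3 * w * cos w)
    hasDerivAt_three_sub_sq_mul_sin_sub_mul_cos (by simp)
    (fun w hw => mul_pos hw.1 (sin_sub_mul_cos_pos hw.1 hw.2.le)) hv0 hvπ

noncomputable def grushinJacobian (a w : ℝ) : ℝ := (1 + a * w + a ^ 2) * sin w - w * cos w

lemma hasDerivAt_grushinJacobian (a w : ℝ) :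
    HasDerivAt (grushinJacobian a)
      (a * sin w + (a * w + a ^ 2) * cos w + w * sin w) w :=
  (((((hasDerivAt_id' w).const_mul a).const_add 1).add_const (a ^ 2)).mul
    (hasDerivAt_sin w)).sub ((hasDerivAt_id' w).mul (hasDerivAt_cos w)) |>.congr_deriv (by ring)

lemma grushinJacobian_pos {a v : ℝ} (hv : v ∈ Ioo 0 π) (h : 0 ≤ a * (a + v)) :
    0 < grushinJacobian a v := by
  have hsplit : grushinJacobian a v = (sin v - v * cos v) + a * (a + v) * sin v := by
    unfold grushinJacobian; ring
  rw [hsplit]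
  exact add_pos_of_pos_of_nonneg (sin_sub_mul_cos_pos hv.1 hv.2.le)
    (mul_nonneg h (sin_pos_of_pos_of_lt_pi hv.1 hv.2).le)

lemma cos_pos_and_add_neg_of_admissible {a v : ℝ} (ha : a < 0) (hv : v ∈ Ioo 0 π)
    (hadm : 0 ≤ a ^ 2 * cos v + a * sin v) : 0 < cos v ∧ a + v < 0 := by
  have hacs : a * cos v + sin v ≤ 0 :=
    nonpos_of_mul_nonneg_right (by linear_combination hadm) ha
  have hs := sin_pos_of_pos_of_lt_pi hv.1 hv.2
  have hcos : 0 < cos v := pos_of_mul_neg_right (by linarith) ha.le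
  have hp := sin_sub_mul_cos_pos hv.1 hv.2.le
  exact ⟨hcos, neg_of_mul_neg_left (by linarith : (a + v) * cos v < 0) hcos.le⟩

lemma mul_deriv_grushinJacobian_le_of_nonneg {a v : ℝ} (ha : 0 ≤ a) (hv : v ∈ Ioo 0 π) :
    v * (a * sin v + (a * v + a ^ 2) * cos v + v * sin v) ≤ 3 * grushinJacobian a v := by
  have hs := (sin_pos_of_pos_of_lt_pi hv.1 hv.2).le
  have hp := (sin_sub_mul_cos_pos hv.1 hv.2.le).le
  have hc₀ := (three_sub_sq_mul_sin_sub_mul_cos_pos hv.1 hv.2.le).le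
  have hquad : 3 * grushinJacobian a v - v * (a * sin v + (a * v + a ^ 2) * cos v + v * sin v) =
      a ^ 2 * (2 * sin v + (sin v - v * cos v)) + a * v * (sin v + (sin v - v * cos v)) +
        ((3 - v ^ 2) * sin v - 3 * v * cos v) := by
    unfold grushinJacobian; ring
  have hv0 := hv.1.le
  rw [← sub_nonneg, hquad]
  positivity

lemma mul_deriv_grushinJacobian_le_of_neg {a v : ℝ} (ha : a < 0) (hv : v ∈ Ioo 0 π)
    (hcos : 0 ≤ cos v) (hadm : 0 ≤ a ^ 2 * cos v + a * sin v) :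
    v * (a * sin v + (a * v + a ^ 2) * cos v + v * sin v) ≤ 3 * grushinJacobian a v := by
  have hp := (sin_sub_mul_cos_pos hv.1 hv.2.le).le
  have hc₀ := (three_sub_sq_mul_sin_sub_mul_cos_pos hv.1 hv.2.le).le
  have hquad : 3 * grushinJacobian a v - v * (a * sin v + (a * v + a ^ 2) * cos v + v * sin v) =
      2 * v * (a ^ 2 * cos v + a * sin v) + 3 * a ^ 2 * (sin v - v * cos v) +
        (-a) * v ^ 2 * cos v + ((3 - v ^ 2) * sin v - 3 * v * cos v) := by
    unfold grushinJacobian; ring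
  have hv0 := hv.1.le
  have hna := neg_nonneg.2 ha.le
  rw [← sub_nonneg, hquad]
  positivity

theorem grushin_log_deriv_bound_general (a v : ℝ)
    (hv : v ∈ Set.Ioo 0 Real.pi)
    (hadm : a ^ 2 * Real.cos v + a * Real.sin v ≥ 0) :
    deriv (fun w : ℝ =>
        Real.log ((1 + a * w + a ^ 2) * Real.sin w - w * Real.cos w)) v
      ≤ 3 / v := by
  obtain ⟨hf, hbound⟩ : 0 < grushinJacobian a v ∧
      v * (a * sin v + (a * v + a ^ 2) * cos v + v * sin v) ≤ 3 * grushinJacobian a v := by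
    rcases le_or_gt 0 a with ha | ha
    · exact ⟨grushinJacobian_pos hv (mul_nonneg ha (by linarith [hv.1])),
        mul_deriv_grushinJacobian_le_of_nonneg ha hv⟩
    · obtain ⟨hcos, hav⟩ := cos_pos_and_add_neg_of_admissible ha hv hadm
      exact ⟨grushinJacobian_pos hv (mul_nonneg_of_nonpos_of_nonpos ha.le hav.le),
        mul_deriv_grushinJacobian_le_of_neg ha hv hcos.le hadm⟩
  change deriv (fun w => log (grushinJacobian a w)) v ≤ 3 / v
  rw [((hasDerivAt_grushinJacobian a v).log hf.ne').deriv, div_le_div_iff₀ hf hv.1]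
  linarith

theorem grushin_log_deriv_bound (a v : ℝ) (ha : a ≠ 0)
    (hv : v ∈ Set.Ioo 0 Real.pi)
    (hadm : a ^ 2 * Real.cos v + a * Real.sin v ≥ 0) :
    deriv (fun w : ℝ =>
        Real.log ((1 + a * w + a ^ 2) * Real.sin w - w * Real.cos w)) v
      ≤ 3 / v :=
  grushin_log_deriv_bound_general a v hv hadm
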